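/- arXiv:math/0702604 — 3 statements merged into one kernel-verified Lean document; each statement's English description precedes it below -/
import Mathlib

section
/- Let C be an abelian category satisfying AB5 which is cocomplete and complete, let (X_i)_{i∈I} be a family of objects, and let f : Y → ⊕_{i∈I} X_i be a morphism such that p_k ∘ f = 0 for every canonical projection p_k : ⊕_{i∈I} X_i → X_k. Then f = 0. -/
open CategoryTheory Limits Classical

/-- The canonical projection `⊕_{i∈I} X_i → X_k` in a preadditive category with coproducts,
defined by the universal property applied to the family `(δ_{ik} · id)`. -/
noncomputable def coproductProj {C : Type*} [Category C] [Preadditive C]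
    {I : Type*} (X : I → C) [HasCoproduct X] (k : I) : (∐ X) ⟶ X k :=
  Sigma.desc (fun i => if h : i = k then eqToHom (by rw [h]) else 0)

attribute [local instance] CategoryTheory.Abelian.hasFiniteBiproducts

section Aux
open CoproductsFromFiniteFiltered

variable {C : Type*} [Category C] [Abelian C] [HasColimits C] [HasLimits C]
variable {I : Type*} (X : I → C)

noncomputable def myEta (S : Finset (Discrete I)) :
    (liftToFinsetObj (Discrete.functor X)).obj S ⟶ ∏ᶜ X :=
  Pi.lift fun k => Sigma.desc fun x => if h : x.1.as = k then eqToHom (by subst h; rfl) else 0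

lemma myEta_mono (S : Finset (Discrete I)) : Mono (myEta X S) := by
  have key : myEta X S ≫ biproduct.lift (fun x : S => Pi.π X x.1.as)
      = (biproduct.isoCoproduct (fun x : S => (Discrete.functor X).obj x.1)).inv := by
    rw [biproduct.isoCoproduct_inv]
    apply colimit.hom_ext
    rintro ⟨x⟩
    apply biproduct.hom_ext
    intro y
    simp only [myEta]
    erw [Category.assoc, Category.assoc, Category.assoc, biproduct.lift_π, limit.lift_π,
      Fan.mk_π_app, colimit.ι_desc, colimit.ι_desc_assoc, Cofan.mk_ι_app, Cofan.mk_ι_app,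
      biproduct.ι_π]
    by_cases h : x = y
    · subst h
      rw [dif_pos rfl, dif_pos rfl]
    · rw [dif_neg (fun hc => h (Subtype.ext (Discrete.ext hc))), dif_neg h]
  have h1 : IsIso (myEta X S ≫ biproduct.lift (fun x : S => Pi.π X x.1.as)) := by
    rw [key]; exact Iso.isIso_inv _
  have h2 : Mono (myEta X S ≫ biproduct.lift (fun x : S => Pi.π X x.1.as)) := inferInstance
  exact mono_of_mono _ (biproduct.lift (fun x : S => Pi.π X x.1.as))

noncomputable def myNat : liftToFinsetObj (Discrete.functor X) ⟶
    (Functor.const (Finset (Discrete I))).obj (∏ᶜ X) where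
  app S := myEta X S
  naturality S T h := by
    apply colimit.hom_ext
    rintro ⟨x⟩
    apply limit.hom_ext
    rintro ⟨k⟩
    simp [myEta, liftToFinsetObj]

end Aux


/-- Let `C` be an abelian category satisfying AB5 which is cocomplete and
complete, `(X_i)_{i∈I}` a family of objects, and `f : Y → ⊕_{i∈I} X_i` a morphism such that
`p_k ∘ f = 0` for every canonical projection `p_k`. Then `f = 0`. -/
theorem stmt0 {C : Type*} [Category C] [Abelian C] [HasColimits C] [HasLimits C] [AB5 C]
    {I : Type*} (X : I → C) (Y : C) (f : Y ⟶ ∐ X)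
    (h : ∀ k : I, f ≫ coproductProj X k = 0) : f = 0 := by
  classical
  set F := Discrete.functor X with hF
  set J := Finset (Discrete I) with hJ
  set P := ∏ᶜ X with hP
  set t : colimit ((Functor.const J).obj P) ⟶ P :=
    colimit.desc _ ⟨P, { app := fun _ => 𝟙 P }⟩ with ht
  have hit : IsIso t := by
    refine ⟨colimit.ι ((Functor.const J).obj P) ∅, ?_, by simp [ht]⟩
    apply colimit.hom_ext
    intro S
    have w1 := colimit.w ((Functor.const J).obj P) (homOfLE (le_sup_left : S ≤ S ⊔ ∅))
    have w2 := colimit.w ((Functor.const J).obj P) (homOfLE (le_sup_right : (∅:J) ≤ S ⊔ ∅))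
    simp only [Functor.const_obj_map, Category.id_comp] at w1 w2
    simp only [ht, colimit.ι_desc_assoc]
    rw [Category.comp_id]
    dsimp
    rw [Category.id_comp, ← w1, ← w2]
  have hmono : Mono (colimMap (myNat X)) := by
    have hm : ∀ S : J, Mono ((myNat X).app S) := fun S => myEta_mono X S
    have : Mono (myNat X) := NatTrans.mono_of_mono_app _
    exact (colim : (J ⥤ C) ⥤ C).map_mono (myNat X)
  set φ : colimit F ≅ colimit (CoproductsFromFiniteFiltered.liftToFinsetObj F) :=
    colimit.isoColimitCocone
    (CoproductsFromFiniteFiltered.liftToFinsetColimitCocone F) with hφ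
  have heq : colimMap (myNat X) ≫ t = φ.inv ≫ Pi.lift (coproductProj X) := by
    apply colimit.hom_ext
    intro S
    apply colimit.hom_ext
    rintro ⟨x, hx⟩
    apply limit.hom_ext
    rintro ⟨k⟩
    have aux := CoproductsFromFiniteFiltered.liftToFinsetColimIso_aux_assoc F
      (j := (⟨x, hx⟩ : S)) (Pi.lift (coproductProj X) ≫ limit.π (Discrete.functor X) ⟨k⟩)
    simp only [ι_colimMap_assoc, ht, colimit.ι_desc_assoc, Category.assoc]
    conv_rhs => erw [Category.assoc, Category.assoc, Category.assoc]
    erw [aux]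
    simp only [myNat, myEta]
    erw [colimit.ι_desc]
    dsimp only
    erw [Category.comp_id, Category.assoc, limit.lift_π, Fan.mk_π_app, colimit.ι_desc,
      Cofan.mk_ι_app]
    simp [coproductProj]
    erw [colimit.ι_desc]
    rfl
  have hfg : f ≫ Pi.lift (coproductProj X) = 0 := by
    apply limit.hom_ext
    rintro ⟨k⟩
    simp [h k]
  have hmt : Mono (colimMap (myNat X) ≫ t) := mono_comp _ _
  have h0 : (f ≫ φ.hom) ≫ (colimMap (myNat X) ≫ t) = 0 := by
    rw [heq]
    simp only [Category.assoc, Iso.hom_inv_id_assoc]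
    exact hfg
  have hz : f ≫ φ.hom = 0 := by
    rw [← cancel_mono (colimMap (myNat X) ≫ t), h0, zero_comp]
  calc f = (f ≫ φ.hom) ≫ φ.inv := by simp
  _ = 0 := by rw [hz]; simp
end

section
/- Let C = ⊕_{n∈ℕ} C_n be a graded object over a commutative ring equipped with maps Δ_{a,b} : C_{a+b} → C_a ⊗ C_b for all a,b ∈ ℕ and ε_0 : C_0 → R satisfying the local coassociativity (Δ_{a,b} ⊗ C_c) ∘ Δ_{a+b,c} = (C_a ⊗ Δ_{b,c}) ∘ Δ_{a,b+c} and local counitality (C_d ⊗ ε_0) ∘ Δ_{d,0} = id and (ε_0 ⊗ C_d) ∘ Δ_{0,d} = id. Then there is a unique comultiplication Δ : C → C ⊗ C with Δ ∘ i_n = Σ_{a+b=n}(i_a ⊗ i_b) ∘ Δ_{a,b}, and (C, Δ, ε_0 ∘ p_0) is a graded coalgebra. -/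
open TensorProduct DirectSum

variable (R : Type*) [CommRing R]

/-- Transport along an equality of indices. -/
def lcast (C : ℕ → Type*) [∀ n, AddCommGroup (C n)] [∀ n, Module R (C n)]
    {m n : ℕ} (h : m = n) : C m ≃ₗ[R] C n := by
  subst h; exact LinearEquiv.refl R (C m)

section Aux

variable (C : ℕ → Type*) [∀ n, AddCommGroup (C n)] [∀ n, Module R (C n)]

lemma lcast_rfl {n : ℕ} (h : n = n) : lcast R C h = LinearEquiv.refl R (C n) := rfl

lemma lcast_lcast {a b c : ℕ} (h1 : a = b) (h2 : b = c) (x : C a) :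
    lcast R C h2 (lcast R C h1 x) = lcast R C (h1.trans h2) x := by
  subst h1; subst h2; rfl

variable {M N P Q M' P' Q' : Type*}
  [AddCommGroup M] [Module R M] [AddCommGroup N] [Module R N]
  [AddCommGroup P] [Module R P] [AddCommGroup Q] [Module R Q]
  [AddCommGroup M'] [Module R M'] [AddCommGroup P'] [Module R P']
  [AddCommGroup Q'] [Module R Q']

lemma sum_map_left {α : Type*} (s : Finset α) (f : α → (M →ₗ[R] P)) (g : N →ₗ[R] Q) :
    TensorProduct.map (∑ i ∈ s, f i) g = ∑ i ∈ s, TensorProduct.map (f i) g := by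
  apply TensorProduct.ext'
  intro m n
  simp [sum_tmul]

lemma sum_map_right {α : Type*} (s : Finset α) (f : M →ₗ[R] P) (g : α → (N →ₗ[R] Q)) :
    TensorProduct.map f (∑ i ∈ s, g i) = ∑ i ∈ s, TensorProduct.map f (g i) := by
  apply TensorProduct.ext'
  intro m n
  simp [tmul_sum]

lemma map_zero_left' (g : N →ₗ[R] Q) : TensorProduct.map (0 : M →ₗ[R] P) g = 0 := by
  apply TensorProduct.ext'; intro m n; simp

lemma map_zero_right' (f : M →ₗ[R] P) : TensorProduct.map f (0 : N →ₗ[R] Q) = 0 := by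
  apply TensorProduct.ext'; intro m n; simp

lemma rTensor_map_apply (h : P →ₗ[R] P') (f : M →ₗ[R] P) (g : N →ₗ[R] Q) (y : M ⊗[R] N) :
    h.rTensor Q (TensorProduct.map f g y) = TensorProduct.map (h ∘ₗ f) g y := by
  have : h.rTensor Q ∘ₗ TensorProduct.map f g = TensorProduct.map (h ∘ₗ f) g :=
    TensorProduct.ext' fun m n => by simp
  exact LinearMap.congr_fun this y

lemma lTensor_map_apply (h : Q →ₗ[R] Q') (f : M →ₗ[R] P) (g : N →ₗ[R] Q) (y : M ⊗[R] N) :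
    h.lTensor P (TensorProduct.map f g y) = TensorProduct.map f (h ∘ₗ g) y := by
  have : h.lTensor P ∘ₗ TensorProduct.map f g = TensorProduct.map f (h ∘ₗ g) :=
    TensorProduct.ext' fun m n => by simp
  exact LinearMap.congr_fun this y

lemma map_comp_left_apply (A : P →ₗ[R] P') (B : M →ₗ[R] P) (g : N →ₗ[R] Q) (y : M ⊗[R] N) :
    TensorProduct.map (A ∘ₗ B) g y = TensorProduct.map A g (B.rTensor N y) := by
  have : TensorProduct.map (A ∘ₗ B) g = TensorProduct.map A g ∘ₗ B.rTensor N :=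
    TensorProduct.ext' fun m n => by simp
  exact LinearMap.congr_fun this y

lemma map_comp_right_apply (f : M →ₗ[R] P) (A : Q →ₗ[R] Q') (B : N →ₗ[R] Q) (y : M ⊗[R] N) :
    TensorProduct.map f (A ∘ₗ B) y = TensorProduct.map f A (B.lTensor M y) := by
  have : TensorProduct.map f (A ∘ₗ B) = TensorProduct.map f A ∘ₗ B.lTensor M :=
    TensorProduct.ext' fun m n => by simp
  exact LinearMap.congr_fun this y

lemma cast_rT (Δab : ∀ a b : ℕ, C (a + b) →ₗ[R] C a ⊗[R] C b) {a u v : ℕ} (b : ℕ)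
    (h : a = u + v) (y : C (a + b)) :
    ((lcast R C h).toLinearMap.rTensor (C b)) (Δab a b y)
      = Δab (u + v) b (lcast R C (by rw [h]) y) := by
  subst h; simp [lcast_rfl]

lemma cast_lT (Δab : ∀ a b : ℕ, C (a + b) →ₗ[R] C a ⊗[R] C b) {b v w : ℕ} (a : ℕ)
    (h : b = v + w) (y : C (a + b)) :
    ((lcast R C h).toLinearMap.lTensor (C a)) (Δab a b y)
      = Δab a (v + w) (lcast R C (by rw [h]) y) := by
  subst h; simp [lcast_rfl]

lemma double_sum_reindex {M : Type*} [AddCommMonoid M] (n : ℕ)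
    (T : ∀ u v w : ℕ, u + v + w = n → M) :
    (∑ p ∈ (Finset.HasAntidiagonal.antidiagonal n).attach, ∑ q ∈ (Finset.HasAntidiagonal.antidiagonal p.1.1).attach,
        T q.1.1 q.1.2 p.1.2 (by
          have h1 := Finset.HasAntidiagonal.mem_antidiagonal.mp p.2
          have h2 := Finset.HasAntidiagonal.mem_antidiagonal.mp q.2
          omega)) =
    (∑ p ∈ (Finset.HasAntidiagonal.antidiagonal n).attach, ∑ q ∈ (Finset.HasAntidiagonal.antidiagonal p.1.2).attach,
        T p.1.1 q.1.1 q.1.2 (by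
          have h1 := Finset.HasAntidiagonal.mem_antidiagonal.mp p.2
          have h2 := Finset.HasAntidiagonal.mem_antidiagonal.mp q.2
          omega)) := by
  rw [Finset.sum_sigma', Finset.sum_sigma']
  refine Finset.sum_nbij'
    (fun r => ⟨⟨(r.2.1.1, r.2.1.2 + r.1.1.2), Finset.HasAntidiagonal.mem_antidiagonal.mpr (by
        have h1 := Finset.HasAntidiagonal.mem_antidiagonal.mp r.1.2
        have h2 := Finset.HasAntidiagonal.mem_antidiagonal.mp r.2.2
        omega)⟩, ⟨(r.2.1.2, r.1.1.2), Finset.HasAntidiagonal.mem_antidiagonal.mpr rfl⟩⟩)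
    (fun r => ⟨⟨(r.1.1.1 + r.2.1.1, r.2.1.2), Finset.HasAntidiagonal.mem_antidiagonal.mpr (by
        have h1 := Finset.HasAntidiagonal.mem_antidiagonal.mp r.1.2
        have h2 := Finset.HasAntidiagonal.mem_antidiagonal.mp r.2.2
        omega)⟩, ⟨(r.1.1.1, r.2.1.1), Finset.HasAntidiagonal.mem_antidiagonal.mpr rfl⟩⟩)
    (fun r _ => Finset.mem_sigma.mpr ⟨Finset.mem_attach _ _, Finset.mem_attach _ _⟩)
    (fun r _ => Finset.mem_sigma.mpr ⟨Finset.mem_attach _ _, Finset.mem_attach _ _⟩)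
    (fun r _ => by
      obtain ⟨⟨⟨a, b⟩, hp⟩, ⟨⟨u, v⟩, hq⟩⟩ := r
      have h : u + v = a := Finset.HasAntidiagonal.mem_antidiagonal.mp hq
      subst h
      rfl)
    (fun r _ => by
      obtain ⟨⟨⟨a, b⟩, hp⟩, ⟨⟨v, w⟩, hq⟩⟩ := r
      have h : v + w = b := Finset.HasAntidiagonal.mem_antidiagonal.mp hq
      subst h
      rfl)
    (fun r _ => by
      obtain ⟨⟨⟨a, b⟩, hp⟩, ⟨⟨u, v⟩, hq⟩⟩ := r
      rfl)

end Aux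

set_option maxHeartbeats 1000000 in
set_option synthInstance.maxHeartbeats 400000 in
/-- Given a graded module `C = ⊕ C_n` with locally coassociative and locally
counital structure maps `Δ_{a,b} : C_{a+b} → C_a ⊗ C_b` and `ε_0 : C_0 → R`, there is a unique
comultiplication `Δ : C → C ⊗ C` with `Δ ∘ i_n = Σ_{a+b=n} (i_a ⊗ i_b) ∘ Δ_{a,b}`, and with the
counit `ε_0 ∘ p_0` it makes `C` a (graded) coalgebra. -/
theorem stmt4 (C : ℕ → Type*) [∀ n, AddCommGroup (C n)] [∀ n, Module R (C n)]
    (Δab : ∀ a b : ℕ, C (a + b) →ₗ[R] C a ⊗[R] C b) (ε0 : C 0 →ₗ[R] R)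
    (hcoassoc : ∀ a b c : ℕ,
      (TensorProduct.assoc R (C a) (C b) (C c)).toLinearMap ∘ₗ
          (Δab a b).rTensor (C c) ∘ₗ Δab (a + b) c =
        (Δab b c).lTensor (C a) ∘ₗ Δab a (b + c) ∘ₗ
          (lcast R C (Nat.add_assoc a b c)).toLinearMap)
    (hcounitr : ∀ d : ℕ,
      (TensorProduct.rid R (C d)).toLinearMap ∘ₗ ε0.lTensor (C d) ∘ₗ Δab d 0 = LinearMap.id)
    (hcounitl : ∀ d : ℕ,
      (TensorProduct.lid R (C d)).toLinearMap ∘ₗ ε0.rTensor (C d) ∘ₗ Δab 0 d =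
        (lcast R C (Nat.zero_add d)).toLinearMap) :
    (∃! Δ : (⨁ n, C n) →ₗ[R] (⨁ n, C n) ⊗[R] (⨁ n, C n),
      ∀ n : ℕ, Δ ∘ₗ DirectSum.lof R ℕ C n =
        ∑ p ∈ (Finset.HasAntidiagonal.antidiagonal n).attach,
          (TensorProduct.map (DirectSum.lof R ℕ C p.1.1) (DirectSum.lof R ℕ C p.1.2)) ∘ₗ
            Δab p.1.1 p.1.2 ∘ₗ
              (lcast R C (Finset.HasAntidiagonal.mem_antidiagonal.mp p.2).symm).toLinearMap) ∧
    (∀ Δ : (⨁ n, C n) →ₗ[R] (⨁ n, C n) ⊗[R] (⨁ n, C n),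
      (∀ n : ℕ, Δ ∘ₗ DirectSum.lof R ℕ C n =
        ∑ p ∈ (Finset.HasAntidiagonal.antidiagonal n).attach,
          (TensorProduct.map (DirectSum.lof R ℕ C p.1.1) (DirectSum.lof R ℕ C p.1.2)) ∘ₗ
            Δab p.1.1 p.1.2 ∘ₗ
              (lcast R C (Finset.HasAntidiagonal.mem_antidiagonal.mp p.2).symm).toLinearMap) →
      ((TensorProduct.assoc R _ _ _).toLinearMap ∘ₗ Δ.rTensor (⨁ n, C n) ∘ₗ Δ =
          Δ.lTensor (⨁ n, C n) ∘ₗ Δ) ∧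
        ((ε0 ∘ₗ DirectSum.component R ℕ C 0).rTensor (⨁ n, C n) ∘ₗ Δ =
          TensorProduct.mk R R (⨁ n, C n) 1) ∧
        ((ε0 ∘ₗ DirectSum.component R ℕ C 0).lTensor (⨁ n, C n) ∘ₗ Δ =
          (TensorProduct.mk R (⨁ n, C n) R).flip 1)) := by
  classical
  constructor
  · refine ⟨DirectSum.toModule R ℕ _ (fun n =>
        ∑ p ∈ (Finset.HasAntidiagonal.antidiagonal n).attach,
          (TensorProduct.map (DirectSum.lof R ℕ C p.1.1) (DirectSum.lof R ℕ C p.1.2)) ∘ₗ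
            Δab p.1.1 p.1.2 ∘ₗ
              (lcast R C (Finset.HasAntidiagonal.mem_antidiagonal.mp p.2).symm).toLinearMap),
      fun n => ?_, fun Δ' h' => ?_⟩
    · exact LinearMap.ext fun x => DirectSum.toModule_lof R n x
    · apply DirectSum.linearMap_ext
      intro n
      rw [h' n]
      ext x
      simp only [LinearMap.comp_apply]
      rw [DirectSum.toModule_lof]
  · intro Δ hΔ
    refine ⟨?_, ?_, ?_⟩
    · -- coassociativity
      apply DirectSum.linearMap_ext
      intro n
      ext x
      simp only [LinearMap.comp_apply, LinearEquiv.coe_coe]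
      have h1 := LinearMap.congr_fun (hΔ n) x
      simp only [LinearMap.comp_apply, LinearMap.sum_apply, LinearEquiv.coe_coe] at h1
      have hLx :
          (TensorProduct.assoc R (⨁ n, C n) (⨁ n, C n) (⨁ n, C n))
              (Δ.rTensor (⨁ n, C n) (Δ (DirectSum.lof R ℕ C n x)))
            = ∑ p ∈ (Finset.HasAntidiagonal.antidiagonal n).attach,
                ∑ q ∈ (Finset.HasAntidiagonal.antidiagonal p.1.1).attach,
                  TensorProduct.map (DirectSum.lof R ℕ C q.1.1)
                      (TensorProduct.map (DirectSum.lof R ℕ C q.1.2) (DirectSum.lof R ℕ C p.1.2))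
                    ((Δab q.1.2 p.1.2).lTensor (C q.1.1)
                      (Δab q.1.1 (q.1.2 + p.1.2)
                        (lcast R C (by
                          have e1 := Finset.HasAntidiagonal.mem_antidiagonal.mp p.2
                          have e2 := Finset.HasAntidiagonal.mem_antidiagonal.mp q.2
                          omega) x))) := by
        rw [h1, map_sum, map_sum]
        refine Finset.sum_congr rfl fun p _ => ?_
        obtain ⟨⟨a, b⟩, hp⟩ := p
        rw [rTensor_map_apply, hΔ a, sum_map_left, LinearMap.sum_apply, map_sum]
        refine Finset.sum_congr rfl fun q _ => ?_
        obtain ⟨⟨u, v⟩, hq⟩ := q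
        rw [map_comp_left_apply, LinearMap.rTensor_comp, LinearMap.comp_apply,
          cast_rT R C Δab b, lcast_lcast, ← TensorProduct.map_map_assoc]
        have h5 := LinearMap.congr_fun (hcoassoc u v b)
          (lcast R C (((Finset.HasAntidiagonal.mem_antidiagonal.mp hp).symm).trans (by
            have := Finset.HasAntidiagonal.mem_antidiagonal.mp hq
            omega)) x)
        simp only [LinearMap.comp_apply, LinearEquiv.coe_coe] at h5
        rw [h5, lcast_lcast]
      have hRx :
          Δ.lTensor (⨁ n, C n) (Δ (DirectSum.lof R ℕ C n x))
            = ∑ p ∈ (Finset.HasAntidiagonal.antidiagonal n).attach,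
                ∑ q ∈ (Finset.HasAntidiagonal.antidiagonal p.1.2).attach,
                  TensorProduct.map (DirectSum.lof R ℕ C p.1.1)
                      (TensorProduct.map (DirectSum.lof R ℕ C q.1.1) (DirectSum.lof R ℕ C q.1.2))
                    ((Δab q.1.1 q.1.2).lTensor (C p.1.1)
                      (Δab p.1.1 (q.1.1 + q.1.2)
                        (lcast R C (by
                          have e1 := Finset.HasAntidiagonal.mem_antidiagonal.mp p.2
                          have e2 := Finset.HasAntidiagonal.mem_antidiagonal.mp q.2
                          omega) x))) := by
        rw [h1, map_sum]
        refine Finset.sum_congr rfl fun p _ => ?_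
        obtain ⟨⟨a, b⟩, hp⟩ := p
        rw [lTensor_map_apply, hΔ b, sum_map_right, LinearMap.sum_apply]
        refine Finset.sum_congr rfl fun q _ => ?_
        obtain ⟨⟨v, w⟩, hq⟩ := q
        rw [map_comp_right_apply, LinearMap.lTensor_comp, LinearMap.comp_apply,
          cast_lT R C Δab a, lcast_lcast]
      rw [hLx, hRx]
      exact double_sum_reindex n
        (fun u v w h =>
          TensorProduct.map (DirectSum.lof R ℕ C u)
              (TensorProduct.map (DirectSum.lof R ℕ C v) (DirectSum.lof R ℕ C w))
            ((Δab v w).lTensor (C u)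
              (Δab u (v + w) (lcast R C (by omega) x))))
    · -- left counit
      apply DirectSum.linearMap_ext
      intro n
      ext x
      simp only [LinearMap.comp_apply]
      have h1 := LinearMap.congr_fun (hΔ n) x
      simp only [LinearMap.comp_apply, LinearMap.sum_apply, LinearEquiv.coe_coe] at h1
      rw [h1, map_sum]
      rw [Finset.sum_eq_single_of_mem
        (⟨(0, n), Finset.HasAntidiagonal.mem_antidiagonal.mpr (Nat.zero_add n)⟩ :
          {p // p ∈ Finset.HasAntidiagonal.antidiagonal n})
        (Finset.mem_attach _ _) ?_]
      · rw [rTensor_map_apply]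
        have hc : (ε0 ∘ₗ DirectSum.component R ℕ C 0) ∘ₗ DirectSum.lof R ℕ C 0 = ε0 := by
          ext z; simp
        rw [hc]
        have main : ∀ (pf : n = 0 + n),
            TensorProduct.map ε0 (DirectSum.lof R ℕ C n) (Δab 0 n (lcast R C pf x))
              = (1 : R) ⊗ₜ[R] (DirectSum.lof R ℕ C n x) := by
          intro pf
          have h2 := LinearMap.congr_fun (hcounitl n) (lcast R C pf x)
          simp only [LinearMap.comp_apply, LinearEquiv.coe_coe] at h2
          rw [lcast_lcast] at h2
          simp only [lcast_rfl, LinearEquiv.refl_apply] at h2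
          have h3 : (ε0.rTensor (C n)) (Δab 0 n (lcast R C pf x))
              = (TensorProduct.lid R (C n)).symm x := by
            apply (TensorProduct.lid R (C n)).injective
            rw [h2, LinearEquiv.apply_symm_apply]
          have h4 : TensorProduct.map ε0 (DirectSum.lof R ℕ C n)
              = (DirectSum.lof R ℕ C n).lTensor R ∘ₗ ε0.rTensor (C n) :=
            (LinearMap.lTensor_comp_rTensor _ _ _).symm
          rw [h4, LinearMap.comp_apply, h3]
          simp
        rw [main]
        simp [TensorProduct.mk_apply]
      · rintro ⟨⟨a, b⟩, hp⟩ - hne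
        rw [rTensor_map_apply]
        have ha : a ≠ 0 := by
          rintro rfl
          refine hne (Subtype.ext ?_)
          have : b = n := by simpa using Finset.HasAntidiagonal.mem_antidiagonal.mp hp
          simp [this]
        have hz : DirectSum.component R ℕ C 0 ∘ₗ DirectSum.lof R ℕ C a = 0 := by
          ext z; simp [DirectSum.component.of, ha]
        rw [LinearMap.comp_assoc, hz, LinearMap.comp_zero, map_zero_left',
          LinearMap.zero_apply]
    · -- right counit
      apply DirectSum.linearMap_ext
      intro n
      ext x
      simp only [LinearMap.comp_apply]
      have h1 := LinearMap.congr_fun (hΔ n) x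
      simp only [LinearMap.comp_apply, LinearMap.sum_apply, LinearEquiv.coe_coe] at h1
      rw [h1, map_sum]
      rw [Finset.sum_eq_single_of_mem
        (⟨(n, 0), Finset.HasAntidiagonal.mem_antidiagonal.mpr rfl⟩ :
          {p // p ∈ Finset.HasAntidiagonal.antidiagonal n})
        (Finset.mem_attach _ _) ?_]
      · rw [lTensor_map_apply]
        have hc : (ε0 ∘ₗ DirectSum.component R ℕ C 0) ∘ₗ DirectSum.lof R ℕ C 0 = ε0 := by
          ext z; simp
        rw [hc]
        have main : ∀ (pf : n = n + 0),
            TensorProduct.map (DirectSum.lof R ℕ C n) ε0 (Δab n 0 (lcast R C pf x))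
              = (DirectSum.lof R ℕ C n x) ⊗ₜ[R] (1 : R) := by
          intro pf
          have hx : lcast R C pf x = x := rfl
          rw [hx]
          have h2 := LinearMap.congr_fun (hcounitr n) x
          simp only [LinearMap.comp_apply, LinearEquiv.coe_coe, LinearMap.id_apply] at h2
          have h3 : (ε0.lTensor (C n)) (Δab n 0 x)
              = (TensorProduct.rid R (C n)).symm x := by
            apply (TensorProduct.rid R (C n)).injective
            rw [h2, LinearEquiv.apply_symm_apply]
          have h4 : TensorProduct.map (DirectSum.lof R ℕ C n) ε0
              = (DirectSum.lof R ℕ C n).rTensor R ∘ₗ ε0.lTensor (C n) :=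
            (LinearMap.rTensor_comp_lTensor _ _ _).symm
          rw [h4, LinearMap.comp_apply, h3]
          simp
        rw [main]
        simp [TensorProduct.mk_apply]
      · rintro ⟨⟨a, b⟩, hp⟩ - hne
        rw [lTensor_map_apply]
        have hb : b ≠ 0 := by
          rintro rfl
          refine hne (Subtype.ext ?_)
          have : a = n := by simpa using Finset.HasAntidiagonal.mem_antidiagonal.mp hp
          simp [this]
        have hz : DirectSum.component R ℕ C 0 ∘ₗ DirectSum.lof R ℕ C b = 0 := by
          ext z; simp [DirectSum.component.of, hb]
        rw [LinearMap.comp_assoc, hz, LinearMap.comp_zero, map_zero_right',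
          LinearMap.zero_apply]
end

section
/- Let δ : D → C be an injective coalgebra homomorphism over a field, and define the iterated wedge powers D^{∧n} = ker(p^{⊗n} ∘ Δ^{n-1}_C) where p : C → C/D is the quotient map. Then for all m, n ≥ 1 one has D^{∧m} ∧_C D^{∧n} = D^{∧(m+n)}, where X ∧_C Y = ker((p_X ⊗ p_Y) ∘ Δ_C) for subspaces X, Y of C. -/
open TensorProduct

universe u

variable (k : Type u) [Field k] (C : Type u) [AddCommGroup C] [Module k C] [Coalgebra k C]

/-- The iterated quotient-tensor spaces `(C/D)^{⊗(n+1)}`. -/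
noncomputable def Qp (D : Submodule k C) : ℕ → ModuleCat.{u} k
  | 0 => ModuleCat.of k (C ⧸ D)
  | n + 1 => ModuleCat.of k ((C ⧸ D) ⊗[k] (Qp D n))

/-- The map `p^{⊗(n+1)} ∘ Δ^n : C → (C/D)^{⊗(n+1)}`, defined recursively by
`ψ_0 = p` and `ψ_{n+1} = (p ⊗ ψ_n) ∘ Δ`. -/
noncomputable def psiMap (D : Submodule k C) : ∀ n : ℕ, C →ₗ[k] Qp k C D n
  | 0 => D.mkQ
  | n + 1 => (TensorProduct.map D.mkQ (psiMap D n)) ∘ₗ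
      (Coalgebra.comul : C →ₗ[k] C ⊗[k] C)

/-- The wedge product `X ∧_C Y = ker((p_X ⊗ p_Y) ∘ Δ)` of two subspaces of `C`. -/
noncomputable def wedge (X Y : Submodule k C) : Submodule k C :=
  LinearMap.ker ((TensorProduct.map X.mkQ Y.mkQ) ∘ₗ (Coalgebra.comul : C →ₗ[k] C ⊗[k] C))

/-- The iterated wedge powers `D^{∧n} = ker(p^{⊗n} ∘ Δ^{n-1})`, with `D^{∧0} = 0`. -/
noncomputable def wpow (D : Submodule k C) : ℕ → Submodule k C
  | 0 => ⊥
  | n + 1 => LinearMap.ker (psiMap k C D n)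

/-- Over a field, the kernel of `f ⊗ g` only depends on the kernels of `f` and `g`. -/
lemma ker_map_eq {A B M N : Type u} [AddCommGroup A] [Module k A] [AddCommGroup B] [Module k B]
    [AddCommGroup M] [Module k M] [AddCommGroup N] [Module k N]
    (f : A →ₗ[k] M) (g : B →ₗ[k] N) :
    LinearMap.ker (TensorProduct.map f g) =
      LinearMap.ker (TensorProduct.map (LinearMap.ker f).mkQ (LinearMap.ker g).mkQ) := by
  set f1 := (LinearMap.ker f).liftQ f le_rfl with hf1
  set g1 := (LinearMap.ker g).liftQ g le_rfl with hg1
  have hcomp : TensorProduct.map f g =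
      (TensorProduct.map f1 g1) ∘ₗ
        TensorProduct.map (LinearMap.ker f).mkQ (LinearMap.ker g).mkQ := by
    rw [← TensorProduct.map_comp]
    congr 1
  have hinjf : Function.Injective f1 :=
    LinearMap.ker_eq_bot.mp (Submodule.ker_liftQ_eq_bot _ _ _ le_rfl)
  have hinjg : Function.Injective g1 :=
    LinearMap.ker_eq_bot.mp (Submodule.ker_liftQ_eq_bot _ _ _ le_rfl)
  have hinj : Function.Injective (TensorProduct.map f1 g1) := by
    rw [← LinearMap.lTensor_comp_rTensor]
    exact (Module.Flat.lTensor_preserves_injective_linearMap g1 hinjg).comp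
      (Module.Flat.rTensor_preserves_injective_linearMap f1 hinjf)
  rw [hcomp]
  exact LinearMap.ker_comp_of_ker_eq_bot _ (LinearMap.ker_eq_bot.mpr hinj)

/-- Over a field, two tensor-product maps with the same factor kernels have the same kernel. -/
lemma ker_map_congr {A B M N M' N' : Type u}
    [AddCommGroup A] [Module k A] [AddCommGroup B] [Module k B]
    [AddCommGroup M] [Module k M] [AddCommGroup N] [Module k N]
    [AddCommGroup M'] [Module k M'] [AddCommGroup N'] [Module k N']
    (f : A →ₗ[k] M) (g : B →ₗ[k] N) (f' : A →ₗ[k] M') (g' : B →ₗ[k] N')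
    (hf : LinearMap.ker f = LinearMap.ker f') (hg : LinearMap.ker g = LinearMap.ker g') :
    LinearMap.ker (TensorProduct.map f g) = LinearMap.ker (TensorProduct.map f' g') := by
  rw [ker_map_eq k f g, ker_map_eq k f' g', hf, hg]

/-- The coassociativity identity for `ψ`: `(p ⊗ (ψ_m ⊗ ψ_n)Δ)Δ = α ∘ (ψ_{m+1} ⊗ ψ_n)Δ`. -/
lemma psi_comp_identity (D : Submodule k C) (m n : ℕ) :
    (TensorProduct.map D.mkQ ((TensorProduct.map (psiMap k C D m) (psiMap k C D n)) ∘ₗ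
        (Coalgebra.comul : C →ₗ[k] C ⊗[k] C))) ∘ₗ (Coalgebra.comul : C →ₗ[k] C ⊗[k] C) =
      (TensorProduct.assoc k (C ⧸ D) (Qp k C D m) (Qp k C D n)).toLinearMap ∘ₗ
        (TensorProduct.map (psiMap k C D (m + 1)) (psiMap k C D n)) ∘ₗ
          (Coalgebra.comul : C →ₗ[k] C ⊗[k] C) := by
  rw [← LinearMap.map_comp_lTensor, LinearMap.comp_assoc, ← Coalgebra.coassoc,
    ← LinearMap.comp_assoc _ _ (TensorProduct.map D.mkQ _),
    ← LinearMap.comp_assoc _ _ (TensorProduct.map D.mkQ _ ∘ₗ _),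
    TensorProduct.map_map_comp_assoc_eq]
  have : psiMap k C D (m + 1) =
      (TensorProduct.map D.mkQ (psiMap k C D m)) ∘ₗ (Coalgebra.comul : C →ₗ[k] C ⊗[k] C) := rfl
  rw [this, ← LinearMap.map_comp_rTensor]
  simp only [LinearMap.comp_assoc]

/-- The key kernel identity: `ker ψ_{m+n+1} = ker ((ψ_m ⊗ ψ_n) ∘ Δ)`. -/
lemma ker_psi_add (D : Submodule k C) : ∀ m n : ℕ,
    LinearMap.ker (psiMap k C D (m + n + 1)) =
      LinearMap.ker ((TensorProduct.map (psiMap k C D m) (psiMap k C D n)) ∘ₗ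
        (Coalgebra.comul : C →ₗ[k] C ⊗[k] C))
  | 0, n => by rw [Nat.zero_add]; rfl
  | m + 1, n => by
    have hidx : m + 1 + n + 1 = (m + n + 1) + 1 := by omega
    rw [hidx]
    have hker : LinearMap.ker (psiMap k C D ((m + n + 1) + 1)) =
        LinearMap.ker ((TensorProduct.map D.mkQ (psiMap k C D (m + n + 1))) ∘ₗ
          (Coalgebra.comul : C →ₗ[k] C ⊗[k] C)) := rfl
    rw [hker, LinearMap.ker_comp, LinearMap.ker_comp,
      ker_map_congr k D.mkQ (psiMap k C D (m + n + 1)) D.mkQ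
        ((TensorProduct.map (psiMap k C D m) (psiMap k C D n)) ∘ₗ
          (Coalgebra.comul : C →ₗ[k] C ⊗[k] C)) rfl (ker_psi_add D m n),
      ← LinearMap.ker_comp, ← LinearMap.ker_comp, psi_comp_identity,
      LinearMap.ker_comp_of_ker_eq_bot _
        (LinearEquiv.ker (TensorProduct.assoc k (C ⧸ D) (Qp k C D m) (Qp k C D n)))]
    rfl

/-- Let `δ : D → C` be an injective coalgebra homomorphism over a field (i.e.
`D` is a subcoalgebra of `C`).  Then `D^{∧m} ∧_C D^{∧n} = D^{∧(m+n)}` for all `m, n ≥ 1`. -/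
theorem stmt7 (D : Submodule k C)
    (hD : ∀ x ∈ D, Coalgebra.comul x ∈
      LinearMap.range (TensorProduct.map D.subtype D.subtype)) :
    ∀ m n : ℕ, 1 ≤ m → 1 ≤ n →
      wedge k C (wpow k C D m) (wpow k C D n) = wpow k C D (m + n) := by
  rintro ⟨⟩ n hm hn
  · omega
  rename_i a
  rcases n with - | b
  · omega
  have hidx : a + 1 + (b + 1) = (a + b + 1) + 1 := by omega
  rw [hidx]
  show LinearMap.ker ((TensorProduct.map (LinearMap.ker (psiMap k C D a)).mkQ
      (LinearMap.ker (psiMap k C D b)).mkQ) ∘ₗ (Coalgebra.comul : C →ₗ[k] C ⊗[k] C)) =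
    LinearMap.ker (psiMap k C D (a + b + 1))
  rw [ker_psi_add, LinearMap.ker_comp, LinearMap.ker_comp,
    ker_map_congr k (LinearMap.ker (psiMap k C D a)).mkQ (LinearMap.ker (psiMap k C D b)).mkQ
      (psiMap k C D a) (psiMap k C D b)
      (by rw [Submodule.ker_mkQ]) (by rw [Submodule.ker_mkQ])]
end
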